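/- arXiv:2210.06321 — 4 statements merged into one kernel-verified Lean document; each statement's English description precedes it below -/
import Mathlib

section
/- Let X and Y be complete metric spaces and Γ: X × Y → X × Y be continuous, given by Γ(x,y) = (Λ(x), Φ(x,y)), where Λ: X → X is a contraction and there exists 0 < γ < 1 such that d_Y(Φ(x,y₁), Φ(x,y₂)) ≤ γ d_Y(y₁,y₂) for all x ∈ X and y₁,y₂ ∈ Y. Then Λ has a unique fixed point x∞, the map Φ(x∞,·) has a unique fixed point y∞, and (x∞, y∞) is a globally attracting fixed point of Γ: for every (x,y) ∈ X × Y, Γⁿ(x,y) → (x∞, y∞) as n → ∞. -/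
/-!
Banach's theorem gives the fixed point `x∞` of `Λ` and `y∞` of `Φ (x∞, ·)`. Along an orbit
`(xₙ, yₙ)` we have `xₙ → x∞`, and the fiber distances `aₙ = d(yₙ, y∞)` satisfy
`aₙ₊₁ ≤ γ aₙ + eₙ` with `eₙ = d(Φ (xₙ, y∞), y∞)`, which tends to `0` by continuity of `Φ`.
A contraction perturbed by errors tending to `0` still drives `aₙ` to `0`.
-/

open Filter Topology

theorem tendsto_zero_of_le_mul_add {γ : ℝ} (hγ0 : 0 ≤ γ) (hγ1 : γ < 1) {a e : ℕ → ℝ}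
    (ha : ∀ n, 0 ≤ a n) (hrec : ∀ n, a (n + 1) ≤ γ * a n + e n)
    (he : Tendsto e atTop (𝓝 0)) : Tendsto a atTop (𝓝 0) := by
  refine tendsto_order.2 ⟨fun δ hδ => .of_forall fun n => hδ.trans_le (ha n), fun δ hδ => ?_⟩
  set ε := δ / 2
  obtain ⟨N, hN⟩ := eventually_atTop.1
    (he.eventually (gt_mem_nhds (by have := sub_pos.2 hγ1; positivity : 0 < (1 - γ) * ε)))
  -- Once `e n < (1 - γ) ε`, the recursion contracts `a n - ε` by the factor `γ`.
  have hdecay : ∀ m, a (N + m) - ε ≤ γ ^ m * (a N - ε) := by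
    intro m
    induction m with
    | zero => simp
    | succ m ih =>
      calc a (N + (m + 1)) - ε ≤ γ * (a (N + m) - ε) := by
            rw [← add_assoc]
            linarith [hrec (N + m), hN (N + m) (Nat.le_add_right N m)]
        _ ≤ γ * (γ ^ m * (a N - ε)) := mul_le_mul_of_nonneg_left ih hγ0
        _ = γ ^ (m + 1) * (a N - ε) := by ring
  have hlim : Tendsto (fun m => ε + γ ^ m * (a N - ε)) atTop (𝓝 ε) := by
    simpa using tendsto_const_nhds.add
      ((tendsto_pow_atTop_nhds_zero_of_lt_one hγ0 hγ1).mul_const (a N - ε))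
  obtain ⟨M, hM⟩ := eventually_atTop.1 (hlim.eventually (gt_mem_nhds (half_lt_self hδ)))
  refine eventually_atTop.2 ⟨N + M, fun n hn => ?_⟩
  obtain ⟨m, rfl⟩ := Nat.exists_eq_add_of_le (le_of_add_le_left hn)
  linarith [hdecay m, hM m (by omega)]

theorem tendsto_of_lipschitzWith_of_tendsto_apply {Y : Type*} [PseudoMetricSpace Y]
    {f : ℕ → Y → Y} {K : NNReal} (hf : ∀ n, LipschitzWith K (f n)) (hK : K < 1) {y₀ : Y}
    (hy₀ : Tendsto (fun n => f n y₀) atTop (𝓝 y₀)) {y : ℕ → Y}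
    (hy : ∀ n, y (n + 1) = f n (y n)) : Tendsto y atTop (𝓝 y₀) := by
  refine tendsto_iff_dist_tendsto_zero.2 (tendsto_zero_of_le_mul_add K.coe_nonneg hK
    (fun n => dist_nonneg) (fun n => ?_) (tendsto_iff_dist_tendsto_zero.1 hy₀))
  calc dist (y (n + 1)) y₀ ≤ dist (f n (y n)) (f n y₀) + dist (f n y₀) y₀ :=
        hy n ▸ dist_triangle _ _ _
    _ ≤ K * dist (y n) y₀ + dist (f n y₀) y₀ := by gcongr; exact (hf n).dist_le_mul _ _

theorem tendsto_iterate_of_lipschitzWith_fiber {X Y : Type*} [TopologicalSpace X]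
    [PseudoMetricSpace Y] {Λ : X → X} {Φ : X × Y → Y} {K : NNReal}
    (hΦ : ∀ x, LipschitzWith K (fun y => Φ (x, y))) (hK : K < 1) {x₀ : X} {y₀ : Y}
    (hΛ : ∀ x, Tendsto (fun n => Λ^[n] x) atTop (𝓝 x₀)) (hy₀ : Φ (x₀, y₀) = y₀)
    (hcont : ContinuousAt (fun x => Φ (x, y₀)) x₀) (p : X × Y) :
    Tendsto (fun n => (fun q : X × Y => (Λ q.1, Φ q))^[n] p) atTop (𝓝 (x₀, y₀)) := by
  set Γ := fun q : X × Y => (Λ q.1, Φ q)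
  have hfst : ∀ n, (Γ^[n] p).1 = Λ^[n] p.1 :=
    (Function.Semiconj.iterate_right (f := Prod.fst) (fun _ => rfl) · p)
  have hsnd : ∀ n, (Γ^[n + 1] p).2 = Φ (Λ^[n] p.1, (Γ^[n] p).2) := fun n => by
    rw [Function.iterate_succ_apply', ← hfst]
  have hfiber : Tendsto (fun n => Φ (Λ^[n] p.1, y₀)) atTop (𝓝 y₀) := by
    have hΦy₀ := hcont.tendsto
    rw [hy₀] at hΦy₀
    exact hΦy₀.comp (hΛ p.1)
  exact Tendsto.prodMk_nhds (by simpa only [hfst] using hΛ p.1)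
    (tendsto_of_lipschitzWith_of_tendsto_apply (fun n => hΦ _) hK hfiber hsnd)

theorem stmt_6_general {X Y : Type*} [MetricSpace X] [MetricSpace Y]
    [CompleteSpace X] [CompleteSpace Y] [Nonempty X] [Nonempty Y]
    (Λ : X → X) (Φ : X × Y → Y)
    (Γ : X × Y → X × Y) (hΓ : Γ = fun p => (Λ p.1, Φ p))
    (hΓcont : Continuous Γ)
    (k : NNReal) (hk : k < 1) (hΛ : LipschitzWith k Λ)
    (γ : ℝ) (hγ1 : γ < 1)
    (hΦ : ∀ (x : X) (y₁ y₂ : Y), dist (Φ (x, y₁)) (Φ (x, y₂)) ≤ γ * dist y₁ y₂) :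
    ∃ xlim : X, ∃ ylim : Y,
      Λ xlim = xlim ∧ (∀ x, Λ x = x → x = xlim) ∧
      Φ (xlim, ylim) = ylim ∧ (∀ y, Φ (xlim, y) = y → y = ylim) ∧
      Γ (xlim, ylim) = (xlim, ylim) ∧
      ∀ p : X × Y, Filter.Tendsto (fun n => Γ^[n] p) Filter.atTop (nhds (xlim, ylim)) := by
  subst hΓ
  have hΛc : ContractingWith k Λ := ⟨hk, hΛ⟩
  have hΦx (x : X) : LipschitzWith γ.toNNReal (fun y => Φ (x, y)) :=
    LipschitzWith.of_dist_le' (hΦ x)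
  have hγ : γ.toNNReal < 1 := Real.toNNReal_lt_one.2 hγ1
  set xlim := ContractingWith.fixedPoint Λ hΛc
  have hΦc : ContractingWith γ.toNNReal (fun y => Φ (xlim, y)) := ⟨hγ, hΦx xlim⟩
  set ylim := ContractingWith.fixedPoint _ hΦc
  have hxlim : Λ xlim = xlim := hΛc.fixedPoint_isFixedPt
  have hylim : Φ (xlim, ylim) = ylim := hΦc.fixedPoint_isFixedPt
  refine ⟨xlim, ylim, hxlim, fun x hx => hΛc.fixedPoint_unique hx, hylim,
    fun y hy => hΦc.fixedPoint_unique hy, by simp only [hxlim, hylim], fun p => ?_⟩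
  have hcont : ContinuousAt (fun x => Φ (x, ylim)) xlim :=
    (hΓcont.snd.comp (Continuous.prodMk_left ylim)).continuousAt
  exact tendsto_iterate_of_lipschitzWith_fiber hΦx hγ hΛc.tendsto_iterate_fixedPoint hylim hcont p

theorem stmt_6 {X Y : Type*} [MetricSpace X] [MetricSpace Y]
    [CompleteSpace X] [CompleteSpace Y] [Nonempty X] [Nonempty Y]
    (Λ : X → X) (Φ : X × Y → Y)
    (Γ : X × Y → X × Y) (hΓ : Γ = fun p => (Λ p.1, Φ p))
    (hΓcont : Continuous Γ)
    (k : NNReal) (hk : k < 1) (hΛ : LipschitzWith k Λ)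
    (γ : ℝ) (hγ0 : 0 < γ) (hγ1 : γ < 1)
    (hΦ : ∀ (x : X) (y₁ y₂ : Y), dist (Φ (x, y₁)) (Φ (x, y₂)) ≤ γ * dist y₁ y₂) :
    ∃ xlim : X, ∃ ylim : Y,
      Λ xlim = xlim ∧ (∀ x, Λ x = x → x = xlim) ∧
      Φ (xlim, ylim) = ylim ∧ (∀ y, Φ (xlim, y) = y → y = ylim) ∧
      Γ (xlim, ylim) = (xlim, ylim) ∧
      ∀ p : X × Y, Filter.Tendsto (fun n => Γ^[n] p) Filter.atTop (nhds (xlim, ylim)) :=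
  stmt_6_general Λ Φ Γ hΓ hΓcont k hk hΛ γ hγ1 hΦ
end

section
/- Let H: ℝ → ℝ be continuous, g: ℝ → ℝ bounded continuous, f⁻¹: ℝ → ℝ any function, and L ≥ 0. The map S: C⁰_b(ℝ; L) → C⁰_b(ℝ) defined by S(φ) = H ∘ (φ∘φ∘f⁻¹ − g∘f⁻¹) is continuous with respect to the supremum norm. -/
/-!
Since `H` is uniformly continuous on compact sets, it suffices that the arguments
`φ (φ y) - g y` stay in a fixed ball and converge uniformly to `φ₀ (φ₀ y) - g y`.
The first holds because `g` is bounded and `φ` is uniformly close to `φ₀`; the second because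
`φ` is `L`-Lipschitz, so `|φ (φ y) - φ₀ (φ₀ y)| ≤ (L + 1) ‖φ - φ₀‖`.
-/

open Metric NNReal BoundedContinuousFunction

namespace BoundedContinuousFunction

theorem dist_comp_self_le_of_lipschitzWith {α : Type*} [PseudoMetricSpace α] {φ ψ : α →ᵇ α}
    {K : ℝ≥0} (hφ : LipschitzWith K φ) (x : α) :
    dist (φ (φ x)) (ψ (ψ x)) ≤ (K + 1) * dist φ ψ :=
  calc dist (φ (φ x)) (ψ (ψ x))
      ≤ dist (φ (φ x)) (φ (ψ x)) + dist (φ (ψ x)) (ψ (ψ x)) := dist_triangle _ _ _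
    _ ≤ K * dist φ ψ + dist φ ψ := by
        gcongr
        · exact (hφ.dist_le_mul _ _).trans (by gcongr; exact dist_coe_le_dist x)
        · exact dist_coe_le_dist _
    _ = (K + 1) * dist φ ψ := by ring

theorem abs_comp_self_sub_le {φ ψ : ℝ →ᵇ ℝ} {g : ℝ → ℝ} {M : ℝ} (hg : ∀ x, |g x| ≤ M) (y : ℝ) :
    |φ (φ y) - g y| ≤ ‖ψ‖ + dist φ ψ + M :=
  calc |φ (φ y) - g y| ≤ |φ (φ y)| + |g y| := abs_sub _ _
    _ ≤ ‖φ‖ + M := add_le_add (φ.norm_coe_le_norm _) (hg y)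
    _ ≤ ‖ψ‖ + dist φ ψ + M := by gcongr; exact norm_le_norm_add_const_of_dist_le le_rfl

end BoundedContinuousFunction

theorem stmt_13_general (H : ℝ → ℝ) (hH : Continuous H)
    (g : ℝ → ℝ) (hgb : ∃ M, ∀ x, |g x| ≤ M)
    (finv : ℝ → ℝ) (L : ℝ)
    (φ₀ : BoundedContinuousFunction ℝ ℝ) :
    ∀ ε > (0 : ℝ), ∃ δ > (0 : ℝ), ∀ φ : BoundedContinuousFunction ℝ ℝ,
      (∀ x y : ℝ, |φ x - φ y| ≤ L * |x - y|) → dist φ φ₀ < δ →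
        ⨆ x : ℝ, |H (φ (φ (finv x)) - g (finv x)) -
          H (φ₀ (φ₀ (finv x)) - g (finv x))| < ε := by
  obtain ⟨M, hM⟩ := hgb
  intro ε hε
  set R := ‖φ₀‖ + 1 + M
  obtain ⟨η, hη, hH_unif⟩ := uniformContinuousOn_iff.mp
    ((isCompact_closedBall (0 : ℝ) R).uniformContinuousOn_of_continuous hH.continuousOn)
    (ε / 2) (half_pos hε)
  set K := L.toNNReal
  refine ⟨min 1 (η / (K + 1)), by positivity, fun φ hlip hd => ?_⟩
  have hφK : LipschitzWith K φ :=
    LipschitzWith.of_dist_le' fun x y => by simpa only [Real.dist_eq] using hlip x y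
  have hd_one : dist φ φ₀ ≤ 1 := hd.le.trans (min_le_left _ _)
  have hd_η : (K + 1) * dist φ φ₀ < η := by
    rw [← lt_div_iff₀' (by positivity)]
    exact hd.trans_le (min_le_right _ _)
  have hmem : ∀ ψ : ℝ →ᵇ ℝ, dist ψ φ₀ ≤ 1 → ∀ y, ψ (ψ y) - g y ∈ closedBall 0 R :=
    fun ψ hψ y => by
      rw [mem_closedBall_zero_iff, Real.norm_eq_abs]
      linarith [ψ.abs_comp_self_sub_le (ψ := φ₀) hM y]
  have hclose : ∀ x, |H (φ (φ (finv x)) - g (finv x)) - H (φ₀ (φ₀ (finv x)) - g (finv x))|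
      < ε / 2 := fun x => by
    rw [← Real.dist_eq]
    refine hH_unif _ (hmem φ hd_one _) _ (hmem φ₀ (by simp) _) ?_
    rw [dist_sub_right]
    exact (dist_comp_self_le_of_lipschitzWith hφK _).trans_lt hd_η
  exact (Real.iSup_le (fun x => (hclose x).le) (by positivity)).trans_lt (half_lt_self hε)

theorem stmt_13 (H : ℝ → ℝ) (hH : Continuous H)
    (g : ℝ → ℝ) (hgc : Continuous g) (hgb : ∃ M, ∀ x, |g x| ≤ M)
    (finv : ℝ → ℝ) (L : ℝ) (hL : 0 ≤ L)
    (φ₀ : BoundedContinuousFunction ℝ ℝ)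
    (hφ₀lip : ∀ x y : ℝ, |φ₀ x - φ₀ y| ≤ L * |x - y|) :
    ∀ ε > (0 : ℝ), ∃ δ > (0 : ℝ), ∀ φ : BoundedContinuousFunction ℝ ℝ,
      (∀ x y : ℝ, |φ x - φ y| ≤ L * |x - y|) → dist φ φ₀ < δ →
        ⨆ x : ℝ, |H (φ (φ (finv x)) - g (finv x)) -
          H (φ₀ (φ₀ (finv x)) - g (finv x))| < ε :=
  stmt_13_general H hH g hgb finv L φ₀
end

section
/- Let h, f, g: ℝ → ℝ be C¹ functions with inf_x |h'(x)| ≥ K, inf_x |f'(x)| ≥ α, sup_x |g(x)| < ∞, and sup_x |g'(x)| ≤ β, where K > 1, α > 0, β > 0 satisfy: β < α²K²/4 when α < 2(1 − 1/K), and β < (K−1)(αK − K + 1) when α ≥ 2(1 − 1/K). Then there exists a C¹ function φ: ℝ → ℝ with bounded derivative satisfying φ(φ(x)) = h(φ(f(x))) + g(x) for all x ∈ ℝ. -/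
/-!
With `Hi = h⁻¹` and `Fi = f⁻¹`, a solution is a fixed point of
`T ψ = Hi ∘ (ψ ∘ ψ ∘ Fi - g ∘ Fi)` acting on bounded continuous functions. On `M`-Lipschitz
functions `T` contracts the sup distance by `(1 + M) / K` and, since `|(T ψ)'| ≤ (M² + β) / (α K)`,
preserves `M`-Lipschitz functions once `M² + β ≤ α K M`. The smaller root of `M² - α K M + β`
meets both requirements precisely under the hypotheses relating `α`, `β`, `K`.

For `C¹` regularity, the derivatives of the iterates `Tⁿ 0` obey `pₙ₊₁ = D(ψₙ, pₙ)`, where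
`D(ψ, ·)` contracts the ball of radius `M` by `2 M / (α K) < 1` and depends continuously on `ψ`.
The fibre contraction principle makes `pₙ` converge uniformly, so the limit of `Tⁿ 0` is `C¹`.
-/

open Function Set Filter Topology BoundedContinuousFunction
open scoped NNReal

section Inverse

variable {u : ℝ → ℝ}

lemma antilipschitzWith_of_le_abs_deriv (hu : Differentiable ℝ u) {c : ℝ≥0} (hc : 0 < c)
    (hcu : ∀ x, (c : ℝ) ≤ |deriv u x|) : AntilipschitzWith c⁻¹ u := by
  refine AntilipschitzWith.of_le_mul_dist fun x y => ?_
  wlog hxy : x < y generalizing x y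
  · rcases (not_lt.1 hxy).eq_or_lt with rfl | hyx
    · simp
    · rw [dist_comm, dist_comm (u x)]
      exact this y x hyx
  obtain ⟨ξ, -, hξ⟩ := exists_deriv_eq_slope u hxy hu.continuous.continuousOn hu.differentiableOn
  have hslope : u y - u x = deriv u ξ * (y - x) := by
    rw [hξ, div_mul_cancel₀ _ (sub_pos.2 hxy).ne']
  rw [Real.dist_eq, Real.dist_eq, abs_sub_comm, abs_sub_comm (u x), hslope, abs_mul,
    abs_of_pos (sub_pos.2 hxy), NNReal.coe_inv, ← div_eq_inv_mul, le_div_iff₀ (by positivity)]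
  nlinarith [hcu ξ]

lemma surjective_of_le_deriv (hu : Differentiable ℝ u) {c : ℝ} (hc : 0 < c)
    (hcu : ∀ x, c ≤ deriv u x) : Surjective u := by
  have hlin := mul_sub_le_image_sub_of_le_deriv hu hcu
  refine hu.continuous.surjective
    (tendsto_atTop_mono' _ ?_ <|
      tendsto_atTop_add_const_left _ (u 0) (tendsto_id.const_mul_atTop hc))
    (tendsto_atBot_mono' _ ?_ <|
      tendsto_atBot_add_const_left _ (u 0) (tendsto_id.const_mul_atBot hc))
  · filter_upwards [eventually_ge_atTop 0] with x hx
    simp only [id]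
    linarith [hlin hx]
  · filter_upwards [eventually_le_atBot 0] with x hx
    simp only [id]
    linarith [hlin hx]

/-- By Darboux's theorem the derivative has constant sign. -/
lemma surjective_of_le_abs_deriv (hu : Differentiable ℝ u) {c : ℝ} (hc : 0 < c)
    (hcu : ∀ x, c ≤ |deriv u x|) : Surjective u := by
  have hne : ∀ x ∈ univ, deriv u x ≠ 0 := fun x _ h => by
    have := hcu x
    rw [h, abs_zero] at this
    linarith
  rcases hasDerivWithinAt_forall_lt_or_forall_gt_of_forall_ne convex_univ
    (fun x _ => (hu x).hasDerivAt.hasDerivWithinAt) hne with hneg | hpos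
  · have hsurj := surjective_of_le_deriv hu.neg hc fun x => by
      rw [deriv.neg']
      exact (hcu x).trans_eq (abs_of_neg (hneg x trivial))
    exact fun y => (hsurj (-y)).imp fun x hx => neg_inj.1 hx
  · exact surjective_of_le_deriv hu hc fun x => (hcu x).trans_eq (abs_of_pos (hpos x trivial))

lemma exists_inverse_of_le_abs_deriv (hu : ContDiff ℝ 1 u) {c : ℝ≥0} (hc : 0 < c)
    (hcu : ∀ x, (c : ℝ) ≤ |deriv u x|) :
    ∃ (v : C(ℝ, ℝ)) (v' : ℝ →ᵇ ℝ), LeftInverse v u ∧ RightInverse v u ∧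
      (∀ y, HasDerivAt v (v' y) y) ∧ ‖v'‖ ≤ (c⁻¹ : ℝ≥0) := by
  have hd := hu.differentiable one_ne_zero
  have hanti := antilipschitzWith_of_le_abs_deriv hd hc hcu
  have hsurj := surjective_of_le_abs_deriv hd hc hcu
  have hne : ∀ x, deriv u x ≠ 0 := fun x h => by
    have := hcu x
    rw [h, abs_zero] at this
    exact absurd this (not_le.2 hc)
  have hv := hanti.to_rightInverse (rightInverse_surjInv hsurj)
  refine ⟨⟨surjInv hsurj, hv.continuous⟩,
    .ofNormedAddCommGroup (fun y => (deriv u (surjInv hsurj y))⁻¹)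
    (((hu.continuous_deriv le_rfl).comp hv.continuous).inv₀ fun y => hne _) _ fun y => ?_,
    leftInverse_surjInv ⟨hanti.injective, hsurj⟩, rightInverse_surjInv hsurj, fun y => ?_,
    norm_ofNormedAddCommGroup_le _ (by positivity) _⟩
  · rw [norm_inv, Real.norm_eq_abs, NNReal.coe_inv]
    exact inv_anti₀ (by exact_mod_cast hc) (hcu _)
  · exact HasDerivAt.of_local_left_inverse hv.continuous.continuousAt (hd _).hasDerivAt (hne _)
      (Eventually.of_forall (rightInverse_surjInv hsurj))

lemma lipschitzWith_of_hasDerivAt {v : ℝ → ℝ} {v' : ℝ →ᵇ ℝ} (hv : ∀ x, HasDerivAt v (v' x) x)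
    {C : ℝ≥0} (hC : ‖v'‖ ≤ C) : LipschitzWith C v :=
  lipschitzWith_of_nnnorm_deriv_le (fun x => (hv x).differentiableAt) fun x => by
    rw [(hv x).deriv, ← NNReal.coe_le_coe, coe_nnnorm]
    exact (v'.norm_coe_le_norm x).trans hC

end Inverse

section Contraction

lemma exists_fixedPoint_tendsto_of_dist_le {X : Type*} [MetricSpace X] [CompleteSpace X]
    {s : Set X} (hs : IsClosed s) {f : X → X} (hfs : MapsTo f s s) {c : ℝ≥0} (hc : c < 1)
    (hf : ∀ x ∈ s, ∀ y ∈ s, dist (f x) (f y) ≤ c * dist x y) {x₀ : X} (hx₀ : x₀ ∈ s) :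
    ∃ y ∈ s, f y = y ∧ Tendsto (fun n => f^[n] x₀) atTop (𝓝 y) := by
  obtain ⟨y, hy, hfy, hlim, -⟩ := ContractingWith.exists_fixedPoint' hs.isComplete hfs
    ⟨hc, LipschitzWith.of_dist_le_mul fun x y => hf x x.2 y y.2⟩ hx₀ (edist_ne_top _ _)
  exact ⟨y, hy, hfy, hlim⟩

lemma tendsto_zero_of_le_mul_add_s14 {a ε : ℕ → ℝ} {c : ℝ} (ha : ∀ n, 0 ≤ a n) (hc₀ : 0 ≤ c)
    (hc : c < 1) (hε : Tendsto ε atTop (𝓝 0)) (h : ∀ n, a (n + 1) ≤ c * a n + ε n) :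
    Tendsto a atTop (𝓝 0) := by
  rw [Metric.tendsto_atTop]
  intro e he
  obtain ⟨N, hN⟩ := Metric.tendsto_atTop.1 hε ((1 - c) * e / 2) (by nlinarith)
  have hgeom : ∀ k, a (N + k) - e / 2 ≤ c ^ k * a N := by
    intro k
    induction k with
    | zero => simp only [add_zero, pow_zero, one_mul]; linarith
    | succ k ih =>
      have hεN := hN (N + k) (by omega)
      rw [Real.dist_eq, sub_zero] at hεN
      rw [← add_assoc, pow_succ]
      nlinarith [h (N + k), le_abs_self (ε (N + k))]
  obtain ⟨k₀, hk₀⟩ := Metric.tendsto_atTop.1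
    ((tendsto_pow_atTop_nhds_zero_of_lt_one hc₀ hc).mul_const (a N)) (e / 2) (by positivity)
  refine ⟨N + k₀, fun n hn => ?_⟩
  obtain ⟨k, rfl⟩ := Nat.exists_eq_add_of_le (le_trans (Nat.le_add_right N k₀) hn)
  have hk := hk₀ k (by omega)
  rw [zero_mul, Real.dist_eq, sub_zero] at hk
  rw [Real.dist_eq, sub_zero, abs_of_nonneg (ha _)]
  linarith [hgeom k, le_abs_self (c ^ k * a N)]

/-- The fibre contraction principle: uniform contractions `F n` that almost fix `y` drive their
orbits to `y`. -/
lemma tendsto_of_dist_le_mul {X : Type*} [PseudoMetricSpace X] {F : ℕ → X → X} {x : ℕ → X}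
    {y : X} {c : ℝ} (hc₀ : 0 ≤ c) (hc : c < 1) (hx : ∀ n, x (n + 1) = F n (x n))
    (hF : ∀ n, dist (F n (x n)) (F n y) ≤ c * dist (x n) y)
    (hy : Tendsto (fun n => F n y) atTop (𝓝 y)) : Tendsto x atTop (𝓝 y) := by
  rw [tendsto_iff_dist_tendsto_zero] at hy ⊢
  refine tendsto_zero_of_le_mul_add_s14 (fun _ => dist_nonneg) hc₀ hc hy fun n => ?_
  rw [hx]
  exact (dist_triangle _ _ _).trans (add_le_add (hF n) le_rfl)

end Contraction

lemma BoundedContinuousFunction.tendsto_compContinuous {α β γ ι : Type*} [TopologicalSpace α]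
    [SeminormedAddCommGroup β] [ProperSpace β] [PseudoMetricSpace γ] (u : β →ᵇ γ)
    {l : Filter ι} {F : ι → α →ᵇ β} {f : α →ᵇ β} (h : Tendsto F l (𝓝 f)) :
    Tendsto (fun i => u.compContinuous (F i).toContinuousMap) l
      (𝓝 (u.compContinuous f.toContinuousMap)) := by
  rw [tendsto_iff_tendstoUniformly] at h ⊢
  have hu : UniformContinuousOn u (Metric.closedBall 0 (‖f‖ + 1)) :=
    (isCompact_closedBall 0 _).uniformContinuousOn_of_continuous u.continuous.continuousOn
  refine hu.comp_tendstoUniformly_eventually ?_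
    (fun x => mem_closedBall_zero_iff.2 ((f.norm_coe_le_norm x).trans (by linarith))) h
  filter_upwards [Metric.tendstoUniformly_iff.1 h 1 one_pos] with i hi x
  rw [mem_closedBall_zero_iff]
  change ‖F i x‖ ≤ ‖f‖ + 1
  have := (norm_le_norm_add_norm_sub' (F i x) (f x))
  rw [← dist_eq_norm, dist_comm] at this
  linarith [f.norm_coe_le_norm x, hi x]

section Operator

variable {κ : ℝ≥0} {Hi : ℝ → ℝ} (hHi : LipschitzWith κ Hi) (Fi : C(ℝ, ℝ)) (G : ℝ →ᵇ ℝ)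

def selfComp (ψ : ℝ →ᵇ ℝ) : ℝ →ᵇ ℝ :=
  ψ.compContinuous (ψ.compContinuous Fi).toContinuousMap

/-- With `Hi = h⁻¹`, `Fi = f⁻¹` and `G = g ∘ f⁻¹`, the fixed points of `eqnMap` are the bounded
continuous solutions of `φ ∘ φ = h ∘ φ ∘ f + g`. -/
def eqnMap (ψ : ℝ →ᵇ ℝ) : ℝ →ᵇ ℝ :=
  (selfComp Fi ψ - G).comp Hi hHi

def eqnDerivMap (a b G' ψ p : ℝ →ᵇ ℝ) : ℝ →ᵇ ℝ :=
  a.compContinuous (selfComp Fi ψ - G).toContinuousMap *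
    (p.compContinuous (ψ.compContinuous Fi).toContinuousMap * p.compContinuous Fi * b - G')

def eqnJetMap (a b G' : ℝ →ᵇ ℝ) (x : (ℝ →ᵇ ℝ) × (ℝ →ᵇ ℝ)) : (ℝ →ᵇ ℝ) × (ℝ →ᵇ ℝ) :=
  (eqnMap hHi Fi G x.1, eqnDerivMap Fi G a b G' x.1 x.2)

variable {Fi G}

@[simp] lemma eqnMap_apply (ψ : ℝ →ᵇ ℝ) (t : ℝ) :
    eqnMap hHi Fi G ψ t = Hi (ψ (ψ (Fi t)) - G t) := rfl

@[simp] lemma eqnDerivMap_apply (a b G' ψ p : ℝ →ᵇ ℝ) (t : ℝ) :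
    eqnDerivMap Fi G a b G' ψ p t =
      a (ψ (ψ (Fi t)) - G t) * (p (ψ (Fi t)) * p (Fi t) * b t - G' t) :=
  rfl

lemma dist_selfComp_le {M : ℝ≥0} {ψ₁ ψ₂ : ℝ →ᵇ ℝ} (hψ₂ : LipschitzWith M ψ₂) :
    dist (selfComp Fi ψ₁) (selfComp Fi ψ₂) ≤ (1 + M) * dist ψ₁ ψ₂ := by
  refine (dist_le (by positivity)).2 fun t => ?_
  calc dist (ψ₁ (ψ₁ (Fi t))) (ψ₂ (ψ₂ (Fi t)))
      ≤ dist (ψ₁ (ψ₁ (Fi t))) (ψ₂ (ψ₁ (Fi t))) + dist (ψ₂ (ψ₁ (Fi t))) (ψ₂ (ψ₂ (Fi t))) :=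
        dist_triangle _ _ _
    _ ≤ dist ψ₁ ψ₂ + M * dist ψ₁ ψ₂ :=
        add_le_add (dist_coe_le_dist _)
          ((hψ₂.dist_le_mul _ _).trans (by gcongr; exact dist_coe_le_dist _))
    _ = (1 + M) * dist ψ₁ ψ₂ := by ring

lemma dist_eqnMap_le {M : ℝ≥0} {ψ₁ ψ₂ : ℝ →ᵇ ℝ} (hψ₂ : LipschitzWith M ψ₂) :
    dist (eqnMap hHi Fi G ψ₁) (eqnMap hHi Fi G ψ₂) ≤ κ * (1 + M) * dist ψ₁ ψ₂ :=
  calc dist (eqnMap hHi Fi G ψ₁) (eqnMap hHi Fi G ψ₂)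
      ≤ κ * dist (selfComp Fi ψ₁ - G) (selfComp Fi ψ₂ - G) := (lipschitz_comp hHi).dist_le_mul _ _
    _ ≤ κ * ((1 + M) * dist ψ₁ ψ₂) := by
        rw [dist_sub_right]
        gcongr
        exact dist_selfComp_le hψ₂
    _ = κ * (1 + M) * dist ψ₁ ψ₂ := by ring

lemma lipschitzWith_eqnMap {ν ρ M : ℝ≥0} (hFi : LipschitzWith ν Fi) (hG : LipschitzWith ρ G)
    {ψ : ℝ →ᵇ ℝ} (hψ : LipschitzWith M ψ) :
    LipschitzWith (κ * (M * M * ν + ρ)) (eqnMap hHi Fi G ψ) := by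
  rw [mul_assoc M]
  exact hHi.comp ((hψ.comp (hψ.comp hFi)).sub hG)

lemma hasDerivAt_eqnMap {a b G' ψ p : ℝ →ᵇ ℝ} (ha : ∀ s, HasDerivAt Hi (a s) s)
    (hb : ∀ t, HasDerivAt Fi (b t) t) (hG : ∀ t, HasDerivAt G (G' t) t)
    (hp : ∀ s, HasDerivAt ψ (p s) s) (t : ℝ) :
    HasDerivAt (eqnMap hHi Fi G ψ) (eqnDerivMap Fi G a b G' ψ p t) t := by
  have := (ha _).comp t (((hp _).comp t ((hp _).comp t (hb t))).sub (hG t))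
  rw [eqnDerivMap_apply, mul_assoc (p _)]
  exact this

lemma norm_eqnDerivMap_le {ν ρ M : ℝ≥0} {a b G' ψ p : ℝ →ᵇ ℝ} (ha : ‖a‖ ≤ κ) (hb : ‖b‖ ≤ ν)
    (hG' : ‖G'‖ ≤ ρ) (hp : ‖p‖ ≤ M) : ‖eqnDerivMap Fi G a b G' ψ p‖ ≤ κ * (M * M * ν + ρ) := by
  refine (norm_mul_le _ _).trans (mul_le_mul ((norm_compContinuous_le _ _).trans ha) ?_
    (norm_nonneg _) κ.2)
  refine (norm_sub_le _ _).trans (add_le_add ?_ hG')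
  refine (norm_mul_le _ _).trans (mul_le_mul ?_ hb (norm_nonneg _) (by positivity))
  exact (norm_mul_le _ _).trans (mul_le_mul ((norm_compContinuous_le _ _).trans hp)
    ((norm_compContinuous_le _ _).trans hp) (norm_nonneg _) M.2)

lemma dist_eqnDerivMap_le {ν M : ℝ≥0} {a b G' ψ p q : ℝ →ᵇ ℝ} (ha : ‖a‖ ≤ κ) (hb : ‖b‖ ≤ ν)
    (hp : ‖p‖ ≤ M) (hq : ‖q‖ ≤ M) :
    dist (eqnDerivMap Fi G a b G' ψ p) (eqnDerivMap Fi G a b G' ψ q) ≤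
      κ * (2 * M) * ν * dist p q := by
  refine (dist_le (by positivity)).2 fun t => ?_
  set y := Fi t
  have hpq : ∀ s, |p s - q s| ≤ dist p q := fun s => by
    rw [← Real.dist_eq]
    exact dist_coe_le_dist s
  have hbound : ∀ (r : ℝ →ᵇ ℝ) {C : ℝ} (s : ℝ), ‖r‖ ≤ C → |r s| ≤ C := fun r C s hr =>
    (r.norm_coe_le_norm s).trans hr
  rw [eqnDerivMap_apply, eqnDerivMap_apply, Real.dist_eq,
    show ∀ A P₁ P₂ Q₁ Q₂ B G : ℝ, A * (P₁ * P₂ * B - G) - A * (Q₁ * Q₂ * B - G) =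
      A * (P₁ * (P₂ - Q₂) + (P₁ - Q₁) * Q₂) * B from fun _ _ _ _ _ _ _ => by ring,
    abs_mul, abs_mul]
  have hmid : |p (ψ y) * (p y - q y) + (p (ψ y) - q (ψ y)) * q y| ≤ 2 * M * dist p q := by
    refine (abs_add_le _ _).trans ?_
    rw [abs_mul, abs_mul]
    nlinarith [hbound p (ψ y) hp, hbound q y hq, hpq y, hpq (ψ y), abs_nonneg (p (ψ y)),
      abs_nonneg (q y), abs_nonneg (p y - q y), abs_nonneg (p (ψ y) - q (ψ y))]
  calc |a _| * |p (ψ y) * (p y - q y) + (p (ψ y) - q (ψ y)) * q y| * |b t|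
      ≤ κ * (2 * M * dist p q) * ν := by
        gcongr
        · exact hbound a _ ha
        · exact hbound b t hb
    _ = κ * (2 * M) * ν * dist p q := by ring

lemma tendsto_eqnDerivMap {M : ℝ≥0} {ψ : ℕ → ℝ →ᵇ ℝ} {φ : ℝ →ᵇ ℝ} (hφ : LipschitzWith M φ)
    (hψ : Tendsto ψ atTop (𝓝 φ)) (a b G' p : ℝ →ᵇ ℝ) :
    Tendsto (fun n => eqnDerivMap Fi G a b G' (ψ n) p) atTop (𝓝 (eqnDerivMap Fi G a b G' φ p)) := by
  have hself : Tendsto (fun n => selfComp Fi (ψ n)) atTop (𝓝 (selfComp Fi φ)) := by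
    rw [tendsto_iff_dist_tendsto_zero] at hψ ⊢
    exact squeeze_zero (fun _ => dist_nonneg) (fun n => dist_selfComp_le hφ)
      (by simpa using hψ.const_mul (1 + (M : ℝ)))
  have hcomp := ((lipschitz_compContinuous Fi).continuous.tendsto φ).comp hψ
  exact (a.tendsto_compContinuous (hself.sub_const G)).mul
    ((((p.tendsto_compContinuous hcomp).mul tendsto_const_nhds).mul tendsto_const_nhds).sub
      tendsto_const_nhds)

lemma mapsTo_eqnJetMap {ν ρ M : ℝ≥0} {a b G' : ℝ →ᵇ ℝ} (ha : ∀ s, HasDerivAt Hi (a s) s)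
    (hb : ∀ t, HasDerivAt Fi (b t) t) (hG : ∀ t, HasDerivAt G (G' t) t) (ha_le : ‖a‖ ≤ κ)
    (hb_le : ‖b‖ ≤ ν) (hG'_le : ‖G'‖ ≤ ρ) (hM : κ * (M * M * ν + ρ) ≤ M) :
    MapsTo (eqnJetMap hHi Fi G a b G') {x | (∀ t, HasDerivAt x.1 (x.2 t) t) ∧ ‖x.2‖ ≤ M}
      {x | (∀ t, HasDerivAt x.1 (x.2 t) t) ∧ ‖x.2‖ ≤ M} := fun x hx =>
  ⟨hasDerivAt_eqnMap hHi ha hb hG hx.1,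
    (norm_eqnDerivMap_le ha_le hb_le hG'_le hx.2).trans (by exact_mod_cast hM)⟩

lemma exists_lipschitzWith_fixedPoint_eqnMap {ν ρ M : ℝ≥0} {b G' : ℝ →ᵇ ℝ}
    (hb : ∀ t, HasDerivAt Fi (b t) t) (hG : ∀ t, HasDerivAt G (G' t) t) (hb_le : ‖b‖ ≤ ν)
    (hG'_le : ‖G'‖ ≤ ρ) (hM₁ : κ * (1 + M) < 1) (hM₂ : κ * (M * M * ν + ρ) ≤ M) :
    ∃ φ : ℝ →ᵇ ℝ, LipschitzWith M φ ∧ eqnMap hHi Fi G φ = φ ∧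
      Tendsto (fun n => (eqnMap hHi Fi G)^[n] 0) atTop (𝓝 φ) := by
  have hS : IsClosed {ψ : ℝ →ᵇ ℝ | LipschitzWith M ψ} :=
    (isClosed_setOfPred_lipschitzWith M).preimage (continuous_coe (α := ℝ) (β := ℝ))
  have hT : MapsTo (eqnMap hHi Fi G) {ψ | LipschitzWith M ψ} {ψ | LipschitzWith M ψ} :=
    fun ψ hψ => (lipschitzWith_eqnMap hHi (lipschitzWith_of_hasDerivAt hb hb_le)
      (lipschitzWith_of_hasDerivAt hG hG'_le) hψ).weaken hM₂
  exact exists_fixedPoint_tendsto_of_dist_le hS hT hM₁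
    (fun _ _ _ hψ₂ => by push_cast; exact dist_eqnMap_le hHi hψ₂) (LipschitzWith.const' 0)

lemma exists_norm_le_fixedPoint_eqnDerivMap {ν ρ M : ℝ≥0} {a b G' : ℝ →ᵇ ℝ} (ha_le : ‖a‖ ≤ κ)
    (hb_le : ‖b‖ ≤ ν) (hG'_le : ‖G'‖ ≤ ρ) (hM₂ : κ * (M * M * ν + ρ) ≤ M)
    (hM₃ : κ * (2 * M) * ν < 1) (φ : ℝ →ᵇ ℝ) :
    ∃ q : ℝ →ᵇ ℝ, ‖q‖ ≤ M ∧ eqnDerivMap Fi G a b G' φ q = q := by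
  have hD : MapsTo (eqnDerivMap Fi G a b G' φ) (Metric.closedBall 0 M) (Metric.closedBall 0 M) :=
    fun p hp => mem_closedBall_zero_iff.2 ((norm_eqnDerivMap_le ha_le hb_le hG'_le
      (mem_closedBall_zero_iff.1 hp)).trans (by exact_mod_cast hM₂))
  obtain ⟨q, hqM, hDq, -⟩ := exists_fixedPoint_tendsto_of_dist_le Metric.isClosed_closedBall hD hM₃
    (fun p hp r hr => by
      push_cast
      exact dist_eqnDerivMap_le ha_le hb_le (mem_closedBall_zero_iff.1 hp)
        (mem_closedBall_zero_iff.1 hr))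
    (Metric.mem_closedBall_self M.2)
  exact ⟨q, mem_closedBall_zero_iff.1 hqM, hDq⟩

lemma iterate_eqnJetMap_fst (a b G' : ℝ →ᵇ ℝ) (n : ℕ) (x : (ℝ →ᵇ ℝ) × (ℝ →ᵇ ℝ)) :
    ((eqnJetMap hHi Fi G a b G')^[n] x).1 = (eqnMap hHi Fi G)^[n] x.1 :=
  (Semiconj.iterate_right (f := Prod.fst) (fun _ => rfl) n).eq x

lemma tendsto_iterate_eqnJetMap_snd {ν M : ℝ≥0} {a b G' φ q : ℝ →ᵇ ℝ} (ha_le : ‖a‖ ≤ κ)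
    (hb_le : ‖b‖ ≤ ν) (hM₃ : κ * (2 * M) * ν < 1) (hφ : LipschitzWith M φ)
    (hTφ : Tendsto (fun n => (eqnMap hHi Fi G)^[n] 0) atTop (𝓝 φ)) (hq : ‖q‖ ≤ M)
    (hDq : eqnDerivMap Fi G a b G' φ q = q)
    (hjet : ∀ n, ‖((eqnJetMap hHi Fi G a b G')^[n] 0).2‖ ≤ M) :
    Tendsto (fun n => ((eqnJetMap hHi Fi G a b G')^[n] 0).2) atTop (𝓝 q) := by
  refine tendsto_of_dist_le_mul (c := κ * (2 * M) * ν)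
    (F := fun n => eqnDerivMap Fi G a b G' ((eqnJetMap hHi Fi G a b G')^[n] 0).1)
    (by positivity) (by exact_mod_cast hM₃) (fun n => by rw [iterate_succ_apply']; rfl)
    (fun n => dist_eqnDerivMap_le ha_le hb_le (hjet n) hq) ?_
  have := tendsto_eqnDerivMap (Fi := Fi) (G := G) hφ hTφ a b G' q
  rw [hDq] at this
  simpa only [iterate_eqnJetMap_fst, Prod.fst_zero] using this

theorem exists_contDiff_fixedPoint_eqnMap {ν ρ M : ℝ≥0} {a b G' : ℝ →ᵇ ℝ}
    (ha : ∀ s, HasDerivAt Hi (a s) s) (hb : ∀ t, HasDerivAt Fi (b t) t)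
    (hG : ∀ t, HasDerivAt G (G' t) t) (ha_le : ‖a‖ ≤ κ) (hb_le : ‖b‖ ≤ ν) (hG'_le : ‖G'‖ ≤ ρ)
    (hM₁ : κ * (1 + M) < 1) (hM₂ : κ * (M * M * ν + ρ) ≤ M) (hM₃ : κ * (2 * M) * ν < 1) :
    ∃ φ : ℝ →ᵇ ℝ, eqnMap hHi Fi G φ = φ ∧ ContDiff ℝ 1 φ ∧ ∀ t, |deriv φ t| ≤ M := by
  obtain ⟨φ, hφM, hTφ, hψφ⟩ :=
    exists_lipschitzWith_fixedPoint_eqnMap hHi hb hG hb_le hG'_le hM₁ hM₂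
  obtain ⟨q, hqM, hDq⟩ := exists_norm_le_fixedPoint_eqnDerivMap ha_le hb_le hG'_le hM₂ hM₃ φ
  have hjet := fun n => (mapsTo_eqnJetMap hHi ha hb hG ha_le hb_le hG'_le hM₂).iterate n
    (x := 0) ⟨fun t => hasDerivAt_const t 0, by simp⟩
  have hφq : ∀ t, HasDerivAt φ (q t) t := hasDerivAt_of_tendstoUniformly
    (tendsto_iff_tendstoUniformly.1
      (tendsto_iterate_eqnJetMap_snd hHi ha_le hb_le hM₃ hφM hψφ hqM hDq fun n => (hjet n).2))
    (Eventually.of_forall fun n => (hjet n).1) fun t => by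
      simpa only [iterate_eqnJetMap_fst, Prod.fst_zero] using
        (tendsto_iff_tendstoUniformly.1 hψφ).tendsto_at t
  have hderiv : deriv φ = q := funext fun t => (hφq t).deriv
  refine ⟨φ, hTφ, contDiff_one_iff_deriv.2 ⟨fun t => (hφq t).differentiableAt, ?_⟩, fun t => ?_⟩
  · rw [hderiv]
    exact q.continuous
  · rw [hderiv]
    exact (q.norm_coe_le_norm t).trans hqM

end Operator

/-- `M` is the smaller root of `X ^ 2 - α K X + β`; the hypotheses are exactly what puts it
below `K - 1`. -/
lemma exists_smaller_root {K α β : ℝ} (hK : 1 < K) (hα : 0 < α) (hβ : 0 ≤ β)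
    (hcond1 : α < 2 * (1 - 1 / K) → β < α ^ 2 * K ^ 2 / 4)
    (hcond2 : 2 * (1 - 1 / K) ≤ α → β < (K - 1) * (α * K - K + 1)) :
    ∃ M : ℝ, 0 ≤ M ∧ M + 1 < K ∧ M ^ 2 + β = α * K * M ∧ 2 * M < α * K := by
  have hK0 : 0 < K := by linarith
  have hcase : α < 2 * (1 - 1 / K) ↔ α * K < 2 * (K - 1) := by
    rw [show 2 * (1 - 1 / K) = 2 * (K - 1) / K by field_simp, lt_div_iff₀ hK0]
  have hdisc : 4 * β < (α * K) ^ 2 := by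
    rcases lt_or_ge α (2 * (1 - 1 / K)) with h | h
    · nlinarith [hcond1 h]
    · nlinarith [hcond2 h, sq_nonneg (α * K - 2 * (K - 1))]
  set s := √((α * K) ^ 2 - 4 * β)
  have hs0 : 0 < s := Real.sqrt_pos.2 (by linarith)
  have hs2 : s ^ 2 = (α * K) ^ 2 - 4 * β := Real.sq_sqrt (by linarith)
  refine ⟨(α * K - s) / 2, by nlinarith [mul_pos hα hK0], ?_, by nlinarith, by linarith⟩
  rcases lt_or_ge α (2 * (1 - 1 / K)) with h | h
  · linarith [hcase.1 h]
  · nlinarith [hcond2 h, hcase.not.1 (not_lt.2 h)]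

lemma exists_admissible_bound {K α β : ℝ≥0} (hK : 1 < (K : ℝ)) (hα : 0 < (α : ℝ))
    (hcond1 : (α : ℝ) < 2 * (1 - 1 / K) → (β : ℝ) < α ^ 2 * K ^ 2 / 4)
    (hcond2 : 2 * (1 - 1 / (K : ℝ)) ≤ α → (β : ℝ) < (K - 1) * (α * K - K + 1)) :
    ∃ M : ℝ≥0, K⁻¹ * (1 + M) < 1 ∧ K⁻¹ * (M * M * α⁻¹ + β * α⁻¹) ≤ M ∧
      K⁻¹ * (2 * M) * α⁻¹ < 1 := by
  obtain ⟨M, hM0, h₁, h₂, h₃⟩ := exists_smaller_root hK hα β.coe_nonneg hcond1 hcond2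
  lift M to ℝ≥0 using hM0
  have hK0 : (0 : ℝ) < K := by linarith
  refine ⟨M, ?_, ?_, ?_⟩
  · rw [← NNReal.coe_lt_coe]
    push_cast
    rw [inv_mul_lt_iff₀ hK0]
    linarith
  · rw [← NNReal.coe_le_coe]
    push_cast
    rw [show (K : ℝ)⁻¹ * (M * M * (α : ℝ)⁻¹ + β * (α : ℝ)⁻¹) = ((M : ℝ) ^ 2 + β) / (α * K) by
      field_simp, div_le_iff₀ (by positivity)]
    linarith
  · rw [← NNReal.coe_lt_coe]
    push_cast
    rw [show (K : ℝ)⁻¹ * (2 * M) * (α : ℝ)⁻¹ = 2 * (M : ℝ) / (α * K) by field_simp,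
      div_lt_one (by positivity)]
    exact h₃

lemma exists_comp_hasDerivAt {g : ℝ → ℝ} (hg : ContDiff ℝ 1 g) (hgb : ∃ C, ∀ x, |g x| ≤ C)
    {β : ℝ≥0} (hdg : ∀ x, |deriv g x| ≤ β) {Fi : C(ℝ, ℝ)} {b : ℝ →ᵇ ℝ} {ν : ℝ≥0}
    (hb : ∀ t, HasDerivAt Fi (b t) t) (hb_le : ‖b‖ ≤ ν) :
    ∃ G G' : ℝ →ᵇ ℝ, (∀ t, G t = g (Fi t)) ∧ (∀ t, HasDerivAt G (G' t) t) ∧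
      ‖G'‖ ≤ (β * ν : ℝ≥0) := by
  obtain ⟨C, hC⟩ := hgb
  refine ⟨.ofNormedAddCommGroup (g ∘ Fi) (hg.continuous.comp Fi.continuous) C fun t => hC _,
    .ofNormedAddCommGroup (fun t => deriv g (Fi t) * b t)
      (((hg.continuous_deriv le_rfl).comp Fi.continuous).mul b.continuous) _ fun t => ?_,
    fun t => rfl, fun t => ((hg.differentiable one_ne_zero) (Fi t)).hasDerivAt.comp t (hb t),
    norm_ofNormedAddCommGroup_le _ (by positivity) _⟩
  rw [norm_mul, NNReal.coe_mul]
  exact mul_le_mul (hdg _) ((b.norm_coe_le_norm t).trans hb_le) (norm_nonneg _) β.2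

theorem stmt_14_general (h f g : ℝ → ℝ) (K α β : ℝ)
    (hh : ContDiff ℝ 1 h) (hf : ContDiff ℝ 1 f) (hg : ContDiff ℝ 1 g)
    (hK : 1 < K) (hα : 0 < α)
    (hdh : ∀ x, K ≤ |deriv h x|) (hdf : ∀ x, α ≤ |deriv f x|)
    (hgb : ∃ M, ∀ x, |g x| ≤ M) (hdg : ∀ x, |deriv g x| ≤ β)
    (hcond1 : α < 2 * (1 - 1 / K) → β < α ^ 2 * K ^ 2 / 4)
    (hcond2 : 2 * (1 - 1 / K) ≤ α → β < (K - 1) * (α * K - K + 1)) :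
    ∃ φ : ℝ → ℝ, ContDiff ℝ 1 φ ∧ (∃ C, ∀ x, |deriv φ x| ≤ C) ∧
      ∀ x, φ (φ x) = h (φ (f x)) + g x := by
  lift K to ℝ≥0 using by linarith
  lift α to ℝ≥0 using hα.le
  lift β to ℝ≥0 using (abs_nonneg _).trans (hdg 0)
  obtain ⟨M, hM₁, hM₂, hM₃⟩ := exists_admissible_bound hK hα hcond1 hcond2
  obtain ⟨Hi, a, -, hhHi, ha, ha_le⟩ :=
    exists_inverse_of_le_abs_deriv hh (by exact_mod_cast zero_lt_one.trans hK) hdh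
  obtain ⟨Fi, b, hFif, -, hb, hb_le⟩ := exists_inverse_of_le_abs_deriv hf (by exact_mod_cast hα) hdf
  obtain ⟨G, G', hG, hG', hG'_le⟩ := exists_comp_hasDerivAt hg hgb hdg hb hb_le
  obtain ⟨φ, hφ, hφC, hφ'⟩ := exists_contDiff_fixedPoint_eqnMap
    (lipschitzWith_of_hasDerivAt ha ha_le) ha hb hG' ha_le hb_le hG'_le hM₁ hM₂ hM₃
  refine ⟨φ, hφC, ⟨M, hφ'⟩, fun x => ?_⟩
  have hfix := DFunLike.congr_fun hφ (f x)
  rw [eqnMap_apply, hG, hFif] at hfix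
  rw [← hfix, hhHi]
  ring

theorem stmt_14 (h f g : ℝ → ℝ) (K α β : ℝ)
    (hh : ContDiff ℝ 1 h) (hf : ContDiff ℝ 1 f) (hg : ContDiff ℝ 1 g)
    (hK : 1 < K) (hα : 0 < α) (hβ : 0 < β)
    (hdh : ∀ x, K ≤ |deriv h x|) (hdf : ∀ x, α ≤ |deriv f x|)
    (hgb : ∃ M, ∀ x, |g x| ≤ M) (hdg : ∀ x, |deriv g x| ≤ β)
    (hcond1 : α < 2 * (1 - 1 / K) → β < α ^ 2 * K ^ 2 / 4)
    (hcond2 : 2 * (1 - 1 / K) ≤ α → β < (K - 1) * (α * K - K + 1)) :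
    ∃ φ : ℝ → ℝ, ContDiff ℝ 1 φ ∧ (∃ C, ∀ x, |deriv φ x| ≤ C) ∧
      ∀ x, φ (φ x) = h (φ (f x)) + g x :=
  stmt_14_general h f g K α β hh hf hg hK hα hdh hdf hgb hdg hcond1 hcond2
end

section
/- There exists a C¹ function φ: ℝ → ℝ with bounded derivative such that φ(φ(x)) = sin(φ(eˣ + 5x)) + 4·φ(eˣ + 5x) + cos x for all x ∈ ℝ. -/
open Real Filter
open scoped BoundedContinuousFunction

/-!
Put `g = f⁻¹` for `f x = eˣ + 5x`. At `y = f x` the equation reads `φ = T φ` with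
`T φ y = (φ (φ (g y)) - sin (φ y) - cos (g y)) / 4`, so it suffices to find a fixed point of `T`
that is `C¹`. Since `|g'| ≤ 1/5` and `g'` is Lipschitz, `T` together with its derivative
`(φ, φ') ↦ (T φ, (T φ)')` maps the pairs with `|φ|, |φ'| ≤ 1` and `φ'` 1-Lipschitz to themselves
and is a `3/4`-contraction for the uniform distance on both components. Such pairs are closed
under uniform convergence, hence form a complete metric space, and Banach's fixed point theorem
applies.
-/

noncomputable section

namespace IteratedFunctionalEquation

lemma abs_sub_le_of_hasDerivAt {f f' : ℝ → ℝ} {C : ℝ} (hf : ∀ x, HasDerivAt f (f' x) x)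
    (hC : ∀ x, |f' x| ≤ C) (a b : ℝ) : |f a - f b| ≤ C * |a - b| :=
  convex_univ.norm_image_sub_le_of_norm_hasDerivWithin_le
    (fun x _ => (hf x).hasDerivWithinAt) (fun x _ => hC x) (Set.mem_univ b) (Set.mem_univ a)

lemma abs_mul_sub_mul_le {a b c d A D x y : ℝ} (ha : |a| ≤ A) (hd : |d| ≤ D)
    (hac : |a - c| ≤ x) (hbd : |b - d| ≤ y) : |a * b - c * d| ≤ A * y + x * D := by
  have hx : 0 ≤ x := (abs_nonneg _).trans hac
  calc |a * b - c * d| = |a * (b - d) + (a - c) * d| := by ring_nf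
    _ ≤ |a| * |b - d| + |a - c| * |d| := by
      simpa only [abs_mul] using abs_add_le (a * (b - d)) ((a - c) * d)
    _ ≤ A * y + x * D := by gcongr; exact (abs_nonneg _).trans ha

lemma abs_mul_le_of_le {a b A B : ℝ} (ha : |a| ≤ A) (hb : |b| ≤ B) : |a * b| ≤ A * B := by
  rw [abs_mul]; exact mul_le_mul ha hb (abs_nonneg b) ((abs_nonneg a).trans ha)

structure IsAdmissible (p q : ℝ → ℝ) : Prop where
  hasDerivAt : ∀ y, HasDerivAt p (q y) y
  abs_le_one : ∀ y, |p y| ≤ 1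
  abs_deriv_le_one : ∀ y, |q y| ≤ 1
  abs_deriv_sub_le : ∀ a b, |q a - q b| ≤ |a - b|

namespace IsAdmissible

variable {p q : ℝ → ℝ}

lemma zero : IsAdmissible (fun _ => 0) (fun _ => 0) where
  hasDerivAt y := hasDerivAt_const y 0
  abs_le_one y := by simp
  abs_deriv_le_one y := by simp
  abs_deriv_sub_le a b := by simp

lemma abs_sub_le (h : IsAdmissible p q) (a b : ℝ) : |p a - p b| ≤ |a - b| := by
  simpa using abs_sub_le_of_hasDerivAt h.hasDerivAt h.abs_deriv_le_one a b

lemma continuous (h : IsAdmissible p q) : Continuous p :=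
  continuous_iff_continuousAt.2 fun y => (h.hasDerivAt y).continuousAt

lemma continuous_deriv (h : IsAdmissible p q) : Continuous q :=
  (LipschitzWith.of_dist_le_mul (K := 1) fun a b => by
    simpa [Real.dist_eq] using h.abs_deriv_sub_le a b).continuous

end IsAdmissible

lemma isClosed_setOf_isAdmissible :
    IsClosed {pq : (ℝ →ᵇ ℝ) × (ℝ →ᵇ ℝ) | IsAdmissible pq.1 pq.2} := by
  refine IsSeqClosed.isClosed fun {s pq} hs hlim => ?_
  have hp := BoundedContinuousFunction.tendsto_iff_tendstoUniformly.1 hlim.fst_nhds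
  have hq := BoundedContinuousFunction.tendsto_iff_tendstoUniformly.1 hlim.snd_nhds
  exact {
    hasDerivAt := hasDerivAt_of_tendstoUniformly hq
      (Eventually.of_forall fun n => (hs n).hasDerivAt) hp.tendsto_at
    abs_le_one := fun y =>
      le_of_tendsto' (hp.tendsto_at y).abs fun n => (hs n).abs_le_one y
    abs_deriv_le_one := fun y =>
      le_of_tendsto' (hq.tendsto_at y).abs fun n => (hs n).abs_deriv_le_one y
    abs_deriv_sub_le := fun a b =>
      le_of_tendsto' ((hq.tendsto_at a).sub (hq.tendsto_at b)).abs
        fun n => (hs n).abs_deriv_sub_le a b }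

structure HasSmallLipschitzDeriv (g g' : ℝ → ℝ) : Prop where
  hasDerivAt : ∀ y, HasDerivAt g (g' y) y
  abs_deriv_le : ∀ y, |g' y| ≤ 1 / 5
  abs_deriv_sub_le : ∀ a b, |g' a - g' b| ≤ |a - b| / 25

lemma HasSmallLipschitzDeriv.abs_sub_le {g g' : ℝ → ℝ} (hg : HasSmallLipschitzDeriv g g')
    (a b : ℝ) : |g a - g b| ≤ |a - b| / 5 := by
  linarith [abs_sub_le_of_hasDerivAt hg.hasDerivAt hg.abs_deriv_le a b]

section Step

variable (g g' : ℝ → ℝ)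

def stepVal (p : ℝ → ℝ) (y : ℝ) : ℝ := (p (p (g y)) - sin (p y) - cos (g y)) / 4

def stepDeriv (p q : ℝ → ℝ) (y : ℝ) : ℝ :=
  (q (p (g y)) * q (g y) * g' y - cos (p y) * q y + sin (g y) * g' y) / 4

variable {g g'} {p q p' q' : ℝ → ℝ}

lemma hasDerivAt_stepVal (hg : ∀ y, HasDerivAt g (g' y) y) (hp : ∀ y, HasDerivAt p (q y) y)
    (y : ℝ) : HasDerivAt (stepVal g p) (stepDeriv g g' p q y) y := by
  have hpg := (hp (g y)).comp y (hg y)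
  have hppg := (hp (p (g y))).comp y hpg
  have hsin := (hasDerivAt_sin (p y)).comp y (hp y)
  have hcos := (hasDerivAt_cos (g y)).comp y (hg y)
  exact (((hppg.sub hsin).sub hcos).div_const 4).congr_deriv (by rw [stepDeriv]; ring)

lemma IsAdmissible.step (hg : HasSmallLipschitzDeriv g g') (h : IsAdmissible p q) :
    IsAdmissible (stepVal g p) (stepDeriv g g' p q) where
  hasDerivAt := hasDerivAt_stepVal hg.hasDerivAt h.hasDerivAt
  abs_le_one y := by
    have h1 := abs_le.1 (h.abs_le_one (p (g y)))
    have h2 := abs_le.1 (abs_sin_le_one (p y))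
    have h3 := abs_le.1 (abs_cos_le_one (g y))
    rw [stepVal, abs_le]; constructor <;> linarith
  abs_deriv_le_one y := by
    have h1 := abs_le.1 (abs_mul_le_of_le (abs_mul_le_of_le (h.abs_deriv_le_one (p (g y)))
      (h.abs_deriv_le_one (g y))) (hg.abs_deriv_le y))
    have h2 := abs_le.1 (abs_mul_le_of_le (abs_cos_le_one (p y)) (h.abs_deriv_le_one y))
    have h3 := abs_le.1 (abs_mul_le_of_le (abs_sin_le_one (g y)) (hg.abs_deriv_le y))
    rw [stepDeriv, abs_le]
    constructor <;> linarith
  abs_deriv_sub_le a b := by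
    have hg_sub := hg.abs_sub_le a b
    have h1 := abs_le.1 (abs_mul_sub_mul_le
      (abs_mul_le_of_le (h.abs_deriv_le_one _) (h.abs_deriv_le_one _)) (hg.abs_deriv_le b)
      (abs_mul_sub_mul_le (h.abs_deriv_le_one _) (h.abs_deriv_le_one _)
        ((h.abs_deriv_sub_le _ _).trans ((h.abs_sub_le _ _).trans hg_sub))
        ((h.abs_deriv_sub_le _ _).trans hg_sub))
      (hg.abs_deriv_sub_le a b))
    have h2 := abs_le.1 (abs_mul_sub_mul_le (abs_cos_le_one (p a)) (h.abs_deriv_le_one b)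
      ((abs_cos_sub_cos_le _ _).trans (h.abs_sub_le a b)) (h.abs_deriv_sub_le a b))
    have h3 := abs_le.1 (abs_mul_sub_mul_le (abs_sin_le_one (g a)) (hg.abs_deriv_le b)
      ((abs_sin_sub_sin_le _ _).trans hg_sub) (hg.abs_deriv_sub_le a b))
    have := abs_nonneg (a - b)
    rw [stepDeriv, stepDeriv, abs_le]
    constructor <;> linarith

lemma abs_stepVal_sub_le (h : IsAdmissible p q) {d : ℝ} (hp : ∀ y, |p y - p' y| ≤ d)
    (y : ℝ) : |stepVal g p y - stepVal g p' y| ≤ 3 / 4 * d := by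
  have h1 := abs_le.1 ((abs_sub_le _ (p (p' (g y))) _).trans
    (add_le_add ((h.abs_sub_le _ _).trans (hp (g y))) (hp (p' (g y)))))
  have h2 := abs_le.1 ((abs_sin_sub_sin_le _ _).trans (hp y))
  rw [stepVal, stepVal, abs_le]
  constructor <;> linarith

lemma abs_stepDeriv_sub_le (hg : HasSmallLipschitzDeriv g g') (h : IsAdmissible p q)
    (h' : IsAdmissible p' q') {d : ℝ} (hp : ∀ y, |p y - p' y| ≤ d)
    (hq : ∀ y, |q y - q' y| ≤ d) (y : ℝ) :
    |stepDeriv g g' p q y - stepDeriv g g' p' q' y| ≤ 3 / 4 * d := by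
  have hqp : |q (p (g y)) - q' (p' (g y))| ≤ d + d := (abs_sub_le _ (q (p' (g y))) _).trans
    (add_le_add ((h.abs_deriv_sub_le _ _).trans (hp (g y))) (hq (p' (g y))))
  have h1 := abs_le.1 (abs_mul_sub_mul_le
    (abs_mul_le_of_le (h.abs_deriv_le_one _) (h.abs_deriv_le_one _)) (hg.abs_deriv_le y)
    (abs_mul_sub_mul_le (h.abs_deriv_le_one _) (h'.abs_deriv_le_one _) hqp (hq (g y)))
    (by simp : |g' y - g' y| ≤ 0))
  have h2 := abs_le.1 (abs_mul_sub_mul_le (abs_cos_le_one (p y)) (h'.abs_deriv_le_one y)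
    ((abs_cos_sub_cos_le _ _).trans (hp y)) (hq y))
  have := (abs_nonneg _).trans (hp y)
  rw [stepDeriv, stepDeriv, abs_le]
  constructor <;> linarith

end Step

abbrev AdmissiblePair : Type := {pq : (ℝ →ᵇ ℝ) × (ℝ →ᵇ ℝ) // IsAdmissible pq.1 pq.2}

def IsAdmissible.toPair {p q : ℝ → ℝ} (h : IsAdmissible p q) : AdmissiblePair :=
  ⟨(.ofNormedAddCommGroup p h.continuous 1 h.abs_le_one,
    .ofNormedAddCommGroup q h.continuous_deriv 1 h.abs_deriv_le_one), h⟩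

instance : CompleteSpace AdmissiblePair :=
  isClosed_setOf_isAdmissible.isComplete.completeSpace_coe

instance : Nonempty AdmissiblePair := ⟨IsAdmissible.zero.toPair⟩

section FixedPoint

variable {g g' : ℝ → ℝ}

def stepMap (hg : HasSmallLipschitzDeriv g g') (pq : AdmissiblePair) : AdmissiblePair :=
  (pq.2.step hg).toPair

lemma contractingWith_stepMap (hg : HasSmallLipschitzDeriv g g') :
    ContractingWith (3 / 4) (stepMap hg) := by
  refine ⟨by norm_num, LipschitzWith.of_dist_le_mul fun pq pq' => ?_⟩
  rw [Subtype.dist_eq, Prod.dist_eq, Subtype.dist_eq, Prod.dist_eq]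
  set d := max (dist pq.1.1 pq'.1.1) (dist pq.1.2 pq'.1.2)
  have hp y : |pq.1.1 y - pq'.1.1 y| ≤ d := by
    rw [← Real.dist_eq]
    exact (BoundedContinuousFunction.dist_coe_le_dist y).trans (le_max_left _ _)
  have hq y : |pq.1.2 y - pq'.1.2 y| ≤ d := by
    rw [← Real.dist_eq]
    exact (BoundedContinuousFunction.dist_coe_le_dist y).trans (le_max_right _ _)
  have hd : 0 ≤ 3 / 4 * d := by positivity
  push_cast
  exact max_le ((BoundedContinuousFunction.dist_le hd).2 (abs_stepVal_sub_le pq.2 hp))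
    ((BoundedContinuousFunction.dist_le hd).2 (abs_stepDeriv_sub_le hg pq.2 pq'.2 hp hq))

theorem exists_isAdmissible_stepVal_eq (hg : HasSmallLipschitzDeriv g g') :
    ∃ p q, IsAdmissible p q ∧ stepVal g p = p := by
  set pq := ContractingWith.fixedPoint _ (contractingWith_stepMap hg)
  have hfix := ContractingWith.fixedPoint_isFixedPt (contractingWith_stepMap hg)
  exact ⟨pq.1.1, pq.1.2, pq.2, congrArg (fun pq : AdmissiblePair => ⇑pq.1.1) hfix⟩

end FixedPoint

def f (x : ℝ) : ℝ := exp x + 5 * x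

lemma hasDerivAt_f (x : ℝ) : HasDerivAt f (exp x + 5) x := by
  have := (hasDerivAt_exp x).fun_add ((hasDerivAt_id' x).const_mul 5)
  rwa [mul_one] at this

lemma strictMono_f : StrictMono f :=
  exp_strictMono.add (strictMono_mul_left_of_pos (by norm_num : (0 : ℝ) < 5))

lemma surjective_f : Function.Surjective f := by
  refine Continuous.surjective (by unfold f; fun_prop)
    (tendsto_atTop_add_left_of_le _ 0 (fun x => (exp_pos x).le)
      (tendsto_id.const_mul_atTop (by norm_num)))
    (tendsto_atBot_add_left_of_ge' _ 1
      ((eventually_le_atBot 0).mono fun x hx => exp_le_one_iff.2 hx)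
      (tendsto_id.const_mul_atBot (by norm_num)))

def fInv : ℝ ≃o ℝ := (strictMono_f.orderIsoOfSurjective f surjective_f).symm

def fInvDeriv (y : ℝ) : ℝ := (exp (fInv y) + 5)⁻¹

lemma fInv_f (x : ℝ) : fInv (f x) = x := by
  simp [fInv]

lemma f_fInv (y : ℝ) : f (fInv y) = y :=
  (strictMono_f.orderIsoOfSurjective f surjective_f).apply_symm_apply y

lemma hasDerivAt_fInv (y : ℝ) : HasDerivAt fInv (fInvDeriv y) y :=
  (hasDerivAt_f (fInv y)).of_local_left_inverse fInv.continuous.continuousAt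
    (by positivity) (Eventually.of_forall f_fInv)

lemma abs_inv_exp_add_five_sub_le (a b : ℝ) :
    |(exp a + 5)⁻¹ - (exp b + 5)⁻¹| ≤ 1 / 5 * |a - b| := by
  refine abs_sub_le_of_hasDerivAt (fun u => ((hasDerivAt_exp u).add_const 5).inv
    (by positivity)) (fun u => ?_) a b
  have := exp_pos u
  rw [abs_div, abs_neg, abs_of_pos this, abs_of_pos (by positivity), div_le_iff₀ (by positivity)]
  nlinarith

lemma abs_fInvDeriv_le (y : ℝ) : |fInvDeriv y| ≤ 1 / 5 := by
  rw [fInvDeriv, abs_of_pos (by positivity), one_div]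
  exact inv_anti₀ (by norm_num) (by linarith [exp_pos (fInv y)])

lemma hasSmallLipschitzDeriv_fInv : HasSmallLipschitzDeriv fInv fInvDeriv where
  hasDerivAt := hasDerivAt_fInv
  abs_deriv_le := abs_fInvDeriv_le
  abs_deriv_sub_le a b := by
    have hfInv := abs_sub_le_of_hasDerivAt hasDerivAt_fInv abs_fInvDeriv_le a b
    have hk := abs_inv_exp_add_five_sub_le (fInv a) (fInv b)
    rw [fInvDeriv, fInvDeriv]
    linarith

end IteratedFunctionalEquation

theorem stmt_16 :
    ∃ φ : ℝ → ℝ, ContDiff ℝ 1 φ ∧ (∃ C, ∀ x, |deriv φ x| ≤ C) ∧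
      ∀ x : ℝ, φ (φ x) =
        Real.sin (φ (Real.exp x + 5 * x)) + 4 * φ (Real.exp x + 5 * x) +
          Real.cos x := by
  open IteratedFunctionalEquation in
  obtain ⟨φ, ψ, hφ, hfix⟩ := exists_isAdmissible_stepVal_eq hasSmallLipschitzDeriv_fInv
  have hderiv : deriv φ = ψ := funext fun x => (hφ.hasDerivAt x).deriv
  refine ⟨φ, contDiff_one_iff_deriv.2 ⟨fun x => (hφ.hasDerivAt x).differentiableAt,
    hderiv ▸ hφ.continuous_deriv⟩, ⟨1, fun x => hderiv ▸ hφ.abs_deriv_le_one x⟩, fun x => ?_⟩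
  have hfx := congrFun hfix (f x)
  rw [stepVal, fInv_f, f] at hfx
  linarith
end
end
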